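/- arXiv:0907.2954 — 2 statements merged into one kernel-verified Lean document; each statement's English description precedes it below -/
import Mathlib

section
/- Let f, g : X → Y be order-preserving maps between finite posets that are homotopic (joined by a fence in the pointwise order). Then the induced simplicial maps K(f), K(g) : K(X) → K(Y) between the order complexes lie in the same contiguity class. -/
/- Theory of strong homotopy types of finite simplicial complexes
   (Barmak–Minian), basic definitions. -/

open Classical

namespace StrongHomotopy

/-- A finite abstract simplicial complex with vertices from the ambient type `V`:
a finite family of nonempty finite subsets of `V`, closed under nonempty subsets.
(All singletons of vertices actually used are faces, by downward closure.) -/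
structure Cplx (V : Type) where
  faces : Finset (Finset V)
  nonempty_of_mem : ∀ ⦃σ : Finset V⦄, σ ∈ faces → σ.Nonempty
  down_closed : ∀ ⦃σ τ : Finset V⦄, σ ∈ faces → τ ⊆ σ → τ.Nonempty → τ ∈ faces

variable {V W : Type}

/-- `v` is a vertex of `K`. -/
def IsVertex (K : Cplx V) (v : V) : Prop := {v} ∈ K.faces

noncomputable section

/-- The set of faces of the link of `v` in `K`. -/
def link (K : Cplx V) (v : V) : Finset (Finset V) :=
  K.faces.filter fun σ => v ∉ σ ∧ insert v σ ∈ K.faces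

/-- A family of faces is a simplicial cone with apex `a`. -/
def IsConeWithApex (F : Finset (Finset V)) (a : V) : Prop :=
  {a} ∈ F ∧ ∀ σ ∈ F, insert a σ ∈ F

/-- A family of faces is a simplicial cone. -/
def IsCone (F : Finset (Finset V)) : Prop := ∃ a, IsConeWithApex F a

/-- `v` is dominated by `v'` in `K`: the link of `v` is a cone with apex `v'`. -/
def DominatedBy (K : Cplx V) (v v' : V) : Prop := IsConeWithApex (link K v) v'

/-- `v` is a dominated vertex of `K`: its link is a simplicial cone. -/
def Dominated (K : Cplx V) (v : V) : Prop := IsCone (link K v)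

/-- Deletion `K ∖ v`: the full subcomplex spanned by the vertices other than `v`. -/
def delete (K : Cplx V) (v : V) : Cplx V where
  faces := K.faces.filter fun σ => v ∉ σ
  nonempty_of_mem := fun σ h => K.nonempty_of_mem (Finset.mem_filter.mp h).1
  down_closed := by
    intro σ τ hσ hsub hne
    rw [Finset.mem_filter] at hσ ⊢
    exact ⟨K.down_closed hσ.1 hsub hne, fun hv => hσ.2 (hsub hv)⟩

/-- The link of a vertex, as a simplicial complex. -/
def linkCplx (K : Cplx V) (v : V) : Cplx V where
  faces := link K v
  nonempty_of_mem := fun σ h => K.nonempty_of_mem (Finset.mem_filter.mp h).1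
  down_closed := by
    intro σ τ hσ hsub hne
    simp only [link, Finset.mem_filter] at hσ ⊢
    refine ⟨K.down_closed hσ.1 hsub hne, fun hv => hσ.2.1 (hsub hv), ?_⟩
    exact K.down_closed hσ.2.2 (Finset.insert_subset_insert v hsub)
      ⟨v, Finset.mem_insert_self v τ⟩

/-- Elementary strong collapse: deletion of a dominated vertex. -/
def ElemStrongCollapse (K L : Cplx V) : Prop := ∃ v, Dominated K v ∧ L = delete K v

/-- `K` strong collapses to `L` (a sequence of elementary strong collapses). -/
def StrongCollapses : Cplx V → Cplx V → Prop := Relation.ReflTransGen ElemStrongCollapse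

/-- The complex with a single vertex `v`. -/
def pt (v : V) : Cplx V where
  faces := {{v}}
  nonempty_of_mem := by
    intro σ h
    rw [Finset.mem_singleton] at h
    subst h
    exact ⟨v, Finset.mem_singleton_self v⟩
  down_closed := by
    intro σ τ hσ hsub hne
    rw [Finset.mem_singleton] at hσ ⊢
    subst hσ
    rcases Finset.subset_singleton_iff.mp hsub with h | h
    · exact absurd h (Finset.nonempty_iff_ne_empty.mp hne)
    · exact h

/-- `K` is strong collapsible: it strong collapses to a single vertex. -/
def StrongCollapsible (K : Cplx V) : Prop := ∃ v, StrongCollapses K (pt v)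

/-- A minimal complex: no dominated vertices. -/
def MinimalCplx (K : Cplx V) : Prop := ∀ v, ¬ Dominated K v

/-- A vertex map is simplicial if it sends faces to faces. -/
def IsSimplicial (K : Cplx V) (L : Cplx W) (f : V → W) : Prop :=
  ∀ σ ∈ K.faces, σ.image f ∈ L.faces

/-- Two vertex maps are contiguous. -/
def Contiguous (K : Cplx V) (L : Cplx W) (f g : V → W) : Prop :=
  ∀ σ ∈ K.faces, σ.image f ∪ σ.image g ∈ L.faces

/-- `f` and `g` lie in the same contiguity class: they are joined by
a finite chain of (pairwise contiguous) maps. -/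
def ContigClass (K : Cplx V) (L : Cplx W) : (V → W) → (V → W) → Prop :=
  Relation.ReflTransGen (Contiguous K L)

/-- A strong equivalence of simplicial complexes. -/
def StrongEquiv (K : Cplx V) (L : Cplx W) (f : V → W) : Prop :=
  IsSimplicial K L f ∧ ∃ g : W → V, IsSimplicial L K g ∧
    ContigClass K K (g ∘ f) id ∧ ContigClass L L (f ∘ g) id

/-- `f` is a simplicial isomorphism from `K` to `L`: a simplicial map,
injective on vertices, inducing a bijection on faces. -/
def IsIsoMap (K : Cplx V) (L : Cplx W) (f : V → W) : Prop :=
  IsSimplicial K L f ∧ Set.InjOn f {v | IsVertex K v} ∧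
    K.faces.image (fun σ => σ.image f) = L.faces

/-- `K` and `L` are simplicially isomorphic. -/
def Isomorphic (K : Cplx V) (L : Cplx W) : Prop := ∃ f, IsIsoMap K L f

/-- `L` is a subcomplex of `K`. -/
def Subcplx (L K : Cplx V) : Prop := L.faces ⊆ K.faces

/-- `L` is a full subcomplex of `K`. -/
def IsFullSub (L K : Cplx V) : Prop :=
  L.faces ⊆ K.faces ∧ ∀ σ ∈ K.faces, (∀ v ∈ σ, IsVertex L v) → σ ∈ L.faces

/-- `K₀` is a core of `K`: a minimal complex to which `K` strong collapses. -/
def IsCore (K K₀ : Cplx V) : Prop := MinimalCplx K₀ ∧ StrongCollapses K K₀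

/-- Same strong homotopy type: joined by a finite sequence of strong collapses,
strong expansions and simplicial isomorphisms. (In the abstract setting, where
new vertices may be created freely, isomorphisms are generated by collapses and
expansions; over a fixed ambient vertex type they must be added as moves.) -/
def SameSHT (K L : Cplx V) : Prop :=
  Relation.ReflTransGen
    (fun A B => ElemStrongCollapse A B ∨ ElemStrongCollapse B A ∨ Isomorphic A B) K L

/-- `K` is vertex-homogeneous: its automorphism group acts transitively on vertices. -/
def VertexHomog (K : Cplx V) : Prop :=
  ∀ v w, IsVertex K v → IsVertex K w → ∃ φ : V → V, IsIsoMap K K φ ∧ φ v = w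

/-! ### The nerve -/

/-- The maximal faces of `K`. -/
def maxFaces (K : Cplx V) : Finset (Finset V) :=
  K.faces.filter fun σ => ∀ τ ∈ K.faces, σ ⊆ τ → σ = τ

/-- The nerve of `K`: vertices are the maximal simplices of `K`; a nonempty set
of maximal simplices is a face iff the simplices have a common vertex. -/
def nerve (K : Cplx V) : Cplx (Finset V) where
  faces := (maxFaces K).powerset.filter fun S => S.Nonempty ∧ ∃ v, ∀ σ ∈ S, v ∈ σ
  nonempty_of_mem := fun S h => (Finset.mem_filter.mp h).2.1
  down_closed := by
    intro S T hS hsub hne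
    rw [Finset.mem_filter, Finset.mem_powerset] at hS ⊢
    obtain ⟨hpow, -, v, hv⟩ := hS
    exact ⟨hsub.trans hpow, hne, v, fun σ hσ => hv σ (hsub hσ)⟩

/-- Iterated ambient vertex types for iterated nerves. -/
def iterV (V : Type) : ℕ → Type := fun n => Nat.rec V (fun _ T => Finset T) n

/-- The iterated nerve `Nⁿ(K)` (with `N⁰(K) = K`). -/
def iterNerve (K : Cplx V) : (n : ℕ) → Cplx (iterV V n)
  | 0 => K
  | n + 1 => nerve (iterNerve K n)

/-- A complex consists of a single vertex. -/
def IsPoint (K : Cplx V) : Prop := ∃ v, K.faces = {{v}}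

/-! ### Joins -/

/-- The left part of a set of vertices of `V ⊕ W`. -/
def lefts (ρ : Finset (V ⊕ W)) : Finset V :=
  ρ.preimage Sum.inl Sum.inl_injective.injOn

/-- The right part of a set of vertices of `V ⊕ W`. -/
def rights (ρ : Finset (V ⊕ W)) : Finset W :=
  ρ.preimage Sum.inr Sum.inr_injective.injOn

lemma lefts_union_rights (ρ : Finset (V ⊕ W)) :
    (lefts ρ).image Sum.inl ∪ (rights ρ).image Sum.inr = ρ := by
  ext x
  cases x with
  | inl v => simp [lefts, rights]
  | inr w => simp [lefts, rights]

lemma lefts_eq (σ : Finset V) (τ : Finset W) :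
    lefts (σ.image Sum.inl ∪ τ.image Sum.inr) = σ := by
  ext v; simp [lefts]

lemma rights_eq (σ : Finset V) (τ : Finset W) :
    rights (σ.image Sum.inl ∪ τ.image Sum.inr) = τ := by
  ext w; simp [rights]

/-- The faces of the join `K * L`. -/
def joinFaces (K : Cplx V) (L : Cplx W) : Finset (Finset (V ⊕ W)) :=
  (((insert ∅ K.faces) ×ˢ (insert ∅ L.faces)).image
    (fun p => p.1.image Sum.inl ∪ p.2.image Sum.inr)).erase ∅

lemma mem_joinFaces {K : Cplx V} {L : Cplx W} {ρ : Finset (V ⊕ W)} :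
    ρ ∈ joinFaces K L ↔
      ρ.Nonempty ∧ lefts ρ ∈ insert ∅ K.faces ∧ rights ρ ∈ insert ∅ L.faces := by
  unfold joinFaces
  constructor
  · intro h
    have hne : ρ ≠ ∅ := Finset.ne_of_mem_erase h
    have h' := Finset.mem_of_mem_erase h
    rw [Finset.mem_image] at h'
    obtain ⟨p, hp, hρ⟩ := h'
    rw [Finset.mem_product] at hp
    subst hρ
    rw [lefts_eq, rights_eq]
    exact ⟨Finset.nonempty_iff_ne_empty.mpr hne, hp.1, hp.2⟩
  · rintro ⟨hne, hl, hr⟩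
    apply Finset.mem_erase.mpr
    refine ⟨Finset.nonempty_iff_ne_empty.mp hne, ?_⟩
    rw [Finset.mem_image]
    exact ⟨(lefts ρ, rights ρ), Finset.mem_product.mpr ⟨hl, hr⟩, lefts_union_rights ρ⟩

/-- The simplicial join `K * L` of complexes with disjoint vertex sets
(realized on the disjoint sum of the ambient types). -/
def join (K : Cplx V) (L : Cplx W) : Cplx (V ⊕ W) where
  faces := joinFaces K L
  nonempty_of_mem := fun ρ h => (mem_joinFaces.mp h).1
  down_closed := by
    intro ρ ρ' hρ hsub hne
    obtain ⟨-, hl, hr⟩ := mem_joinFaces.mp hρ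
    apply mem_joinFaces.mpr
    refine ⟨hne, ?_, ?_⟩
    · rcases Finset.eq_empty_or_nonempty (lefts ρ') with h0 | h1
      · rw [h0]; exact Finset.mem_insert_self _ _
      · have hsubl : lefts ρ' ⊆ lefts ρ := by
          intro v hv
          simp only [lefts, Finset.mem_preimage] at hv ⊢
          exact hsub hv
        have hKf : lefts ρ ∈ K.faces := by
          rcases Finset.mem_insert.mp hl with h | h
          · obtain ⟨v, hv⟩ := h1
            exact absurd (hsubl hv) (by simp [h])
          · exact h
        exact Finset.mem_insert.mpr (Or.inr (K.down_closed hKf hsubl h1))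
    · rcases Finset.eq_empty_or_nonempty (rights ρ') with h0 | h1
      · rw [h0]; exact Finset.mem_insert_self _ _
      · have hsubr : rights ρ' ⊆ rights ρ := by
          intro w hw
          simp only [rights, Finset.mem_preimage] at hw ⊢
          exact hsub hw
        have hLf : rights ρ ∈ L.faces := by
          rcases Finset.mem_insert.mp hr with h | h
          · obtain ⟨w, hw⟩ := h1
            exact absurd (hsubr hw) (by simp [h])
          · exact h
        exact Finset.mem_insert.mpr (Or.inr (L.down_closed hLf hsubr h1))

/-! ### Finite posets (finite T₀-spaces) -/

variable {P : Type} [PartialOrder P]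

/-- `x` is a beat point of the finite poset `X`: the points of `X` strictly below
`x` have a maximum, or the points of `X` strictly above `x` have a minimum. -/
def BeatPoint (X : Finset P) (x : P) : Prop :=
  x ∈ X ∧ ((∃ y ∈ X, y < x ∧ ∀ z ∈ X, z < x → z ≤ y) ∨
    (∃ y ∈ X, x < y ∧ ∀ z ∈ X, x < z → y ≤ z))

/-- Elementary strong collapse of finite posets: removal of a beat point. -/
def ElemPosetStrongCollapse (X Y : Finset P) : Prop :=
  ∃ x, BeatPoint X x ∧ Y = X.erase x

/-- Strong collapse of finite posets: successive removal of beat points. -/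
def PosetStrongCollapses : Finset P → Finset P → Prop :=
  Relation.ReflTransGen ElemPosetStrongCollapse

/-- A finite poset is contractible iff it strong collapses to a point (Stong). -/
def PosetContractible (X : Finset P) : Prop := ∃ x, PosetStrongCollapses X {x}

/-- The link `Ĉ_x` of `x` in `X`: the points of `X` comparable with `x` and distinct
from it. -/
def posetLink (X : Finset P) (x : P) : Finset P :=
  X.filter fun y => y < x ∨ x < y

/-- `x` is a weak point of `X`: its link is contractible. -/
def WeakPoint (X : Finset P) (x : P) : Prop :=
  x ∈ X ∧ PosetContractible (posetLink X x)

/-- Collapse of finite posets: successive removal of weak points. -/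
def PosetCollapses : Finset P → Finset P → Prop :=
  Relation.ReflTransGen (fun X Y => ∃ x, WeakPoint X x ∧ Y = X.erase x)

/-- A finite poset is collapsible if it collapses to a point. -/
def PosetCollapsible (X : Finset P) : Prop := ∃ x, PosetCollapses X {x}

/-- The order complex of a finite poset: faces are the nonempty chains. -/
def orderCplx (X : Finset P) : Cplx P where
  faces := X.powerset.filter fun σ => σ.Nonempty ∧ IsChain (· ≤ ·) (σ : Set P)
  nonempty_of_mem := fun σ h => (Finset.mem_filter.mp h).2.1
  down_closed := by
    intro σ τ hσ hsub hne
    rw [Finset.mem_filter, Finset.mem_powerset] at hσ ⊢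
    exact ⟨hsub.trans hσ.1, hne, hσ.2.2.mono (Finset.coe_subset.mpr hsub)⟩

/-- The barycentric subdivision of a complex: the order complex of its poset of
faces (the face poset, ordered by inclusion). -/
def sd (K : Cplx V) : Cplx (Finset V) := orderCplx K.faces

/-- Homotopy of order-preserving maps between finite posets: being joined by a
fence in the pointwise order. -/
def PosetHomotopic {X Y : Type} [Preorder X] [Preorder Y] (f g : X →o Y) : Prop :=
  Relation.ReflTransGen (fun p q : X →o Y => p ≤ q ∨ q ≤ p) f g

/-- Homotopy equivalence of finite posets. -/
def PosetHomotopyEquiv (X Y : Type) [Preorder X] [Preorder Y] : Prop :=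
  ∃ (f : X →o Y) (g : Y →o X),
    PosetHomotopic (g.comp f) OrderHom.id ∧ PosetHomotopic (f.comp g) OrderHom.id

/-! ### Classical collapses and n-collapses -/

/-- Elementary (classical) simplicial collapse: removal of a free face `σ`
together with the unique face `τ` properly containing it. -/
def ElemCollapse (K L : Cplx V) : Prop :=
  ∃ σ τ : Finset V, σ ∈ K.faces ∧ τ ∈ K.faces ∧ σ ⊂ τ ∧
    (∀ ρ ∈ K.faces, σ ⊂ ρ → ρ = τ) ∧ L.faces = K.faces \ {σ, τ}

/-- Classical simplicial collapse. -/
def Collapses : Cplx V → Cplx V → Prop := Relation.ReflTransGen ElemCollapse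

/-- A complex is collapsible if it collapses to a point. -/
def Collapsible (K : Cplx V) : Prop := ∃ v, Collapses K (pt v)

/-- `n`-collapses: a `0`-collapse is a strong collapse; an `(n+1)`-collapse
successively deletes vertices whose links are `n`-collapsible. -/
def NCollapses : ℕ → Cplx V → Cplx V → Prop
  | 0 => StrongCollapses
  | n + 1 => Relation.ReflTransGen
      (fun K L => ∃ v, (∃ w, NCollapses n (linkCplx K v) (pt w)) ∧ L = delete K v)

/-- `K` is `n`-collapsible: it `n`-collapses to a single vertex. -/
def NCollapsible (n : ℕ) (K : Cplx V) : Prop := ∃ v, NCollapses n K (pt v)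

/-- `K` is non-evasive: it is `n`-collapsible for some `n`. -/
def NonEvasive (K : Cplx V) : Prop := ∃ n, NCollapsible n K

end

lemma mem_orderCplx_univ_iff {X : Type} [PartialOrder X] [Fintype X] {σ : Finset X} :
    σ ∈ (orderCplx (Finset.univ : Finset X)).faces ↔
      σ.Nonempty ∧ IsChain (· ≤ ·) (σ : Set X) := by
  simp [orderCplx]

lemma contigClass_of_le {X Y : Type} [PartialOrder X] [PartialOrder Y]
    [Fintype X] [Fintype Y] (p q : X →o Y) (hpq : p ≤ q) :
    ContigClass (orderCplx (Finset.univ : Finset X))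
      (orderCplx (Finset.univ : Finset Y)) ⇑p ⇑q := by
  classical
  suffices H : ∀ n (p q : X →o Y),
      (Finset.univ.filter fun x => p x ≠ q x).card ≤ n → p ≤ q →
      ContigClass (orderCplx (Finset.univ : Finset X))
        (orderCplx (Finset.univ : Finset Y)) ⇑p ⇑q from
    H _ p q le_rfl hpq
  intro n
  induction n with
  | zero =>
      intro p q hcard _
      have heq : p = q := by
        ext x
        by_contra hx
        have hmem : x ∈ Finset.univ.filter fun x => p x ≠ q x := by
          simp [hx]
        simpa using (Finset.card_pos.mpr ⟨x, hmem⟩).trans_le hcard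
      rw [heq]
      exact Relation.ReflTransGen.refl
  | succ n ih =>
      intro p q hcard hpq
      by_cases hfix : p = q
      · rw [hfix]; exact Relation.ReflTransGen.refl
      · have hSne : (Finset.univ.filter fun x => p x ≠ q x).Nonempty := by
          rcases Function.ne_iff.mp (fun h => hfix (OrderHom.ext _ _ h)) with ⟨x, hx⟩
          exact ⟨x, by simp [hx]⟩
        obtain ⟨x, hxS, hxmax⟩ : ∃ x ∈ Finset.univ.filter (fun x => p x ≠ q x),
            ∀ y ∈ Finset.univ.filter (fun x => p x ≠ q x), ¬ x < y := by
          obtain ⟨x, hx⟩ := Finset.exists_maximal hSne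
          exact ⟨x, hx.1, fun y hy hlt => lt_irrefl x (hlt.trans_le (hx.2 hy hlt.le))⟩
        -- q agrees with p strictly above x
        have hagree : ∀ y, x < y → p y = q y := by
          intro y hy
          by_contra hne
          exact hxmax y (by simp [hne]) hy
        -- intermediate map
        have hmono : Monotone fun z => if z = x then q x else p z := by
          intro z w hzw
          by_cases hz : z = x
          · by_cases hw : w = x
            · rw [hz, hw]
            · have hlt : x < w := lt_of_le_of_ne (hz ▸ hzw) (Ne.symm hw)
              simp only [hz, if_pos rfl, if_neg hw]
              rw [hagree w hlt]
              exact q.monotone (le_of_lt hlt)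
          · by_cases hw : w = x
            · simp only [if_neg hz, if_pos hw]
              exact (p.monotone (hw ▸ hzw)).trans (hpq x)
            · simp only [if_neg hz, if_neg hw]
              exact p.monotone hzw
        set h : X →o Y := ⟨fun z => if z = x then q x else p z, hmono⟩ with hdefh
        have hval : ∀ z, h z = if z = x then q x else p z := fun z => rfl
        have hcontig : Contiguous (orderCplx (Finset.univ : Finset X))
            (orderCplx (Finset.univ : Finset Y)) ⇑p ⇑h := by
          intro σ hσ
          obtain ⟨hne, hchain⟩ := mem_orderCplx_univ_iff.mp hσ
          apply mem_orderCplx_univ_iff.mpr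
          constructor
          · obtain ⟨a, ha⟩ := hne
            exact ⟨p a, Finset.mem_union_left _ (Finset.mem_image_of_mem _ ha)⟩
          · have key : ∀ y ∈ σ, ∀ z ∈ σ, p y ≤ h z ∨ h z ≤ p y := by
              intro y hy z hz
              by_cases hzx : z = x
              · subst hzx
                rcases eq_or_ne y z with rfl | hyz
                · rw [hval y, if_pos rfl]
                  exact Or.inl (hpq y)
                · rcases hchain hy hz hyz with hle | hle
                  · rw [hval z, if_pos rfl]
                    exact Or.inl ((p.monotone hle).trans (hpq z))
                  · have hlt : z < y := lt_of_le_of_ne hle (fun e => hyz e.symm)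
                    rw [hval z, if_pos rfl]
                    refine Or.inr ?_
                    rw [hagree y hlt]
                    exact q.monotone (le_of_lt hlt)
              · rw [hval z, if_neg hzx]
                rcases eq_or_ne y z with rfl | hyz
                · exact Or.inl le_rfl
                · rcases hchain hy hz hyz with hle | hle
                  · exact Or.inl (p.monotone hle)
                  · exact Or.inr (p.monotone hle)
            intro a ha b hb hab
            simp only [Finset.coe_union, Set.mem_union, Finset.coe_image,
              Set.mem_image, Finset.mem_coe] at ha hb
            rcases ha with ⟨y, hy, rfl⟩ | ⟨y, hy, rfl⟩ <;>
              rcases hb with ⟨z, hz, rfl⟩ | ⟨z, hz, rfl⟩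
            · rcases eq_or_ne y z with rfl | hyz
              · exact absurd rfl hab
              · rcases hchain hy hz hyz with hle | hle
                · exact Or.inl (p.monotone hle)
                · exact Or.inr (p.monotone hle)
            · exact key y hy z hz
            · exact (key z hz y hy).symm.imp id id
            · rcases eq_or_ne y z with rfl | hyz
              · exact absurd rfl hab
              · rcases hchain hy hz hyz with hle | hle
                · exact Or.inl (h.monotone hle)
                · exact Or.inr (h.monotone hle)
        have hhq : h ≤ q := by
          intro z
          show (if z = x then q x else p z) ≤ q z
          by_cases hz : z = x
          · rw [if_pos hz, hz]
          · rw [if_neg hz]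
            exact hpq z
        have hsub : (Finset.univ.filter fun z => h z ≠ q z) ⊆
            (Finset.univ.filter fun z => p z ≠ q z).erase x := by
          intro z hz
          simp only [Finset.mem_filter, Finset.mem_univ, true_and] at hz
          rcases eq_or_ne z x with rfl | hzx
          · exact absurd (by rw [hval z, if_pos rfl]) hz
          · refine Finset.mem_erase.mpr ⟨hzx, ?_⟩
            simp only [Finset.mem_filter, Finset.mem_univ, true_and]
            intro he
            exact hz (by rw [hval z, if_neg hzx, he])
        have hcard' : (Finset.univ.filter fun z => h z ≠ q z).card ≤ n := by
          calc (Finset.univ.filter fun z => h z ≠ q z).card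
              ≤ ((Finset.univ.filter fun z => p z ≠ q z).erase x).card :=
                Finset.card_le_card hsub
            _ = (Finset.univ.filter fun z => p z ≠ q z).card - 1 :=
                Finset.card_erase_of_mem hxS
            _ ≤ n := by omega
        exact Relation.ReflTransGen.head hcontig (ih h q hcard' hhq)

/-- homotopic order-preserving maps between finite posets induce
simplicial maps of order complexes in the same contiguity class. -/
theorem stmt16 {X Y : Type} [PartialOrder X] [PartialOrder Y] [Fintype X] [Fintype Y]
    (f g : X →o Y) (h : PosetHomotopic f g) :
    ContigClass (orderCplx (Finset.univ : Finset X))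
      (orderCplx (Finset.univ : Finset Y)) ⇑f ⇑g := by
  have hsym : Symmetric (Contiguous (orderCplx (Finset.univ : Finset X))
      (orderCplx (Finset.univ : Finset Y))) := by
    intro a b hab σ hσ
    rw [Finset.union_comm]
    exact hab σ hσ
  induction h with
  | refl => exact Relation.ReflTransGen.refl
  | tail _ hstep ih =>
      rename_i b c _
      refine ih.trans ?_
      rcases hstep with hle | hle
      · exact contigClass_of_le b c hle
      · haveI : Std.Symm (Contiguous (orderCplx (Finset.univ : Finset X))
            (orderCplx (Finset.univ : Finset Y))) := ⟨hsym⟩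
        exact Std.Symm.symm (r := Relation.ReflTransGen (Contiguous
          (orderCplx (Finset.univ : Finset X)) (orderCplx (Finset.univ : Finset Y))))
          _ _ (contigClass_of_le c b hle)

end StrongHomotopy
end

section
/- Let X be a finite poset and Y ⊆ X a subposet. Then X collapses to Y (by successively removing weak points) if and only if the order complex K(X) 1-collapses to the order complex K(Y). In particular, X is collapsible if and only if K(X) is 1-collapsible. -/
/- Theory of strong homotopy types of finite simplicial complexes
   (Barmak–Minian), basic definitions. -/

open Classical

namespace StrongHomotopy

variable {V W : Type}

section Proof

variable {P : Type} [PartialOrder P]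

theorem Cplx.ext' {K L : Cplx V} (h : K.faces = L.faces) : K = L := by
  cases K; cases L; cases h; rfl

theorem mem_orderCplx {Z σ : Finset P} :
    σ ∈ (orderCplx Z).faces ↔ σ ⊆ Z ∧ σ.Nonempty ∧ IsChain (· ≤ ·) (σ : Set P) := by
  simp [orderCplx, Finset.mem_filter, Finset.mem_powerset, and_assoc]

theorem singleton_mem_orderCplx {Z : Finset P} {y : P} :
    ({y} : Finset P) ∈ (orderCplx Z).faces ↔ y ∈ Z := by
  rw [mem_orderCplx]
  constructor
  · rintro ⟨h, -, -⟩; simpa using h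
  · intro h
    exact ⟨Finset.singleton_subset_iff.mpr h, Finset.singleton_nonempty y,
      by rw [Finset.coe_singleton]; exact Set.subsingleton_singleton.isChain⟩

theorem orderCplx_inj {Z W : Finset P} (h : orderCplx Z = orderCplx W) : Z = W := by
  ext y
  rw [← singleton_mem_orderCplx (Z := Z), ← singleton_mem_orderCplx (Z := W), h]

theorem orderCplx_singleton (v : P) : orderCplx ({v} : Finset P) = pt v := by
  apply Cplx.ext'
  ext σ
  simp only [pt, Finset.mem_singleton]
  rw [mem_orderCplx]
  constructor
  · rintro ⟨hs, hne, -⟩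
    exact (Finset.subset_singleton_iff.mp hs).resolve_left hne.ne_empty
  · rintro rfl
    exact ⟨subset_rfl, Finset.singleton_nonempty v,
      by rw [Finset.coe_singleton]; exact Set.subsingleton_singleton.isChain⟩

theorem delete_orderCplx (Z : Finset P) (x : P) :
    delete (orderCplx Z) x = orderCplx (Z.erase x) := by
  apply Cplx.ext'
  ext σ
  simp only [delete, Finset.mem_filter]
  rw [mem_orderCplx, mem_orderCplx, Finset.subset_erase]
  tauto

theorem mem_link {K : Cplx V} {v : V} {σ : Finset V} :
    σ ∈ link K v ↔ σ ∈ K.faces ∧ v ∉ σ ∧ insert v σ ∈ K.faces := by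
  simp [link, Finset.mem_filter]


theorem mem_posetLink {Z : Finset P} {x y : P} :
    y ∈ posetLink Z x ↔ y ∈ Z ∧ (y < x ∨ x < y) := by
  simp [posetLink, Finset.mem_filter]

theorem linkCplx_orderCplx {Z : Finset P} {x : P} (hx : x ∈ Z) :
    linkCplx (orderCplx Z) x = orderCplx (posetLink Z x) := by
  apply Cplx.ext'
  ext σ
  show σ ∈ link (orderCplx Z) x ↔ _
  rw [mem_link, mem_orderCplx, mem_orderCplx, mem_orderCplx]
  constructor
  · rintro ⟨⟨hsub, hne, hchain⟩, hxσ, ⟨-, -, hchain'⟩⟩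
    refine ⟨?_, hne, hchain⟩
    intro y hy
    rw [mem_posetLink]
    refine ⟨hsub hy, ?_⟩
    have hyx : y ≠ x := fun h => hxσ (h ▸ hy)
    have hmy : y ∈ (↑(insert x σ) : Set P) := by
      rw [Finset.coe_insert]; exact Set.mem_insert_of_mem _ hy
    have hmx : x ∈ (↑(insert x σ) : Set P) := by
      rw [Finset.coe_insert]; exact Set.mem_insert _ _
    rcases hchain' hmy hmx hyx with h | h
    · exact Or.inl (lt_of_le_of_ne h hyx)
    · exact Or.inr (lt_of_le_of_ne h hyx.symm)
  · rintro ⟨hsub, hne, hchain⟩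
    have hcomp : ∀ y ∈ σ, y < x ∨ x < y := fun y hy => (mem_posetLink.mp (hsub hy)).2
    have hsubZ : σ ⊆ Z := fun y hy => (mem_posetLink.mp (hsub hy)).1
    have hxσ : x ∉ σ := fun h => by rcases hcomp x h with h' | h' <;> exact lt_irrefl x h'
    refine ⟨⟨hsubZ, hne, hchain⟩, hxσ, Finset.insert_subset hx hsubZ,
      ⟨x, Finset.mem_insert_self _ _⟩, ?_⟩
    rw [Finset.coe_insert]
    refine hchain.insert fun y hy hne' => ?_
    rcases hcomp y (Finset.mem_coe.mp hy) with h | h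
    · exact Or.inr h.le
    · exact Or.inl h.le

theorem coneWithApex_link {Z : Finset P} {x a : P} (hxZ : x ∈ Z) (haZ : a ∈ Z) (hax : a ≠ x)
    (haxc : a ≤ x ∨ x ≤ a)
    (hcomp : ∀ y ∈ Z, y ≠ x → (y ≤ x ∨ x ≤ y) → (a ≤ y ∨ y ≤ a)) :
    IsConeWithApex (link (orderCplx Z) x) a := by
  constructor
  · rw [mem_link]
    refine ⟨singleton_mem_orderCplx.mpr haZ, by simpa using fun e => hax e.symm, ?_⟩
    rw [mem_orderCplx]
    refine ⟨Finset.insert_subset hxZ (Finset.singleton_subset_iff.mpr haZ),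
      ⟨x, Finset.mem_insert_self _ _⟩, ?_⟩
    rw [Finset.coe_insert, Finset.coe_singleton]
    refine Set.subsingleton_singleton.isChain.insert fun y hy _ => ?_
    rw [Set.mem_singleton_iff] at hy; subst hy
    exact haxc.symm
  · intro σ hσ
    rw [mem_link] at hσ ⊢
    obtain ⟨hfσ, hxσ, hif⟩ := hσ
    obtain ⟨hsubZ, hne, hchain⟩ := mem_orderCplx.mp hfσ
    obtain ⟨-, -, hchain'⟩ := mem_orderCplx.mp hif
    have hcσ : ∀ y ∈ σ, y ≤ x ∨ x ≤ y := by
      intro y hy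
      have hyx : y ≠ x := fun h => hxσ (h ▸ hy)
      have hmy : y ∈ (↑(insert x σ) : Set P) := by
        rw [Finset.coe_insert]; exact Set.mem_insert_of_mem _ hy
      have hmx : x ∈ (↑(insert x σ) : Set P) := by
        rw [Finset.coe_insert]; exact Set.mem_insert _ _
      exact hchain' hmy hmx hyx
    have hcaσ : ∀ y ∈ σ, a ≤ y ∨ y ≤ a := by
      intro y hy
      have hyx : y ≠ x := fun h => hxσ (h ▸ hy)
      exact hcomp y (hsubZ hy) hyx (hcσ y hy)
    have hfa : insert a σ ∈ (orderCplx Z).faces := by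
      rw [mem_orderCplx]
      refine ⟨Finset.insert_subset haZ hsubZ, ⟨a, Finset.mem_insert_self _ _⟩, ?_⟩
      rw [Finset.coe_insert]
      exact hchain.insert fun y hy _ => hcaσ y (Finset.mem_coe.mp hy)
    refine ⟨hfa, ?_, ?_⟩
    · intro hmem
      rcases Finset.mem_insert.mp hmem with e | hmem
      · exact hax e.symm
      · exact hxσ hmem
    · rw [mem_orderCplx]
      refine ⟨Finset.insert_subset hxZ ((mem_orderCplx.mp hfa).1),
        ⟨x, Finset.mem_insert_self _ _⟩, ?_⟩
      rw [Finset.coe_insert]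
      refine (mem_orderCplx.mp hfa).2.2.insert fun y hy _ => ?_
      rw [Finset.coe_insert, Set.mem_insert_iff] at hy
      rcases hy with rfl | hy
      · exact haxc.symm
      · exact (hcσ y (Finset.mem_coe.mp hy)).symm

theorem dominated_of_beatPoint {Z : Finset P} {x : P} (h : BeatPoint Z x) :
    Dominated (orderCplx Z) x := by
  obtain ⟨hxZ, h⟩ := h
  rcases h with ⟨a, haZ, hax, hmax⟩ | ⟨a, haZ, hax, hmin⟩
  · refine ⟨a, coneWithApex_link hxZ haZ hax.ne (Or.inl hax.le) ?_⟩
    intro y hyZ hyx hyc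
    rcases hyc with h' | h'
    · exact Or.inr (hmax y hyZ (lt_of_le_of_ne h' hyx))
    · exact Or.inl (hax.le.trans h')
  · refine ⟨a, coneWithApex_link hxZ haZ hax.ne' (Or.inr hax.le) ?_⟩
    intro y hyZ hyx hyc
    rcases hyc with h' | h'
    · exact Or.inr (h'.trans hax.le)
    · exact Or.inl (hmin y hyZ (lt_of_le_of_ne h' (Ne.symm hyx)))

theorem strongCollapses_orderCplx {A B : Finset P} (h : PosetStrongCollapses A B) :
    StrongCollapses (orderCplx A) (orderCplx B) := by
  refine Relation.ReflTransGen.lift orderCplx ?_ _ _ h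
  rintro Z W ⟨x, hx, rfl⟩
  exact ⟨x, dominated_of_beatPoint hx, (delete_orderCplx Z x).symm⟩


theorem minimalCplx_of_minimal {Z : Finset P} (h : ∀ x, ¬ BeatPoint Z x) :
    MinimalCplx (orderCplx Z) := by
  rintro x ⟨a, ha1, ha2⟩
  rw [mem_link] at ha1
  obtain ⟨haf, hxa, hxaf⟩ := ha1
  have haZ : a ∈ Z := singleton_mem_orderCplx.mp haf
  have hax : a ≠ x := fun e => hxa (by simp [e])
  obtain ⟨hsubxa, -, hchxa⟩ := mem_orderCplx.mp hxaf
  have hxZ : x ∈ Z := hsubxa (Finset.mem_insert_self _ _)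
  have hcomp_ax : a ≤ x ∨ x ≤ a := by
    have hma : a ∈ (↑(insert x ({a} : Finset P)) : Set P) := by
      rw [Finset.coe_insert, Finset.coe_singleton]
      exact Set.mem_insert_of_mem _ rfl
    have hmx : x ∈ (↑(insert x ({a} : Finset P)) : Set P) := by
      rw [Finset.coe_insert]; exact Set.mem_insert _ _
    exact hchxa hma hmx hax
  have hkey : ∀ y ∈ Z, y ≠ x → (y ≤ x ∨ x ≤ y) → (a ≤ y ∨ y ≤ a) := by
    intro y hyZ hyx hyc
    by_cases hya : y = a
    · subst hya; exact Or.inl le_rfl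
    have hy_link : ({y} : Finset P) ∈ link (orderCplx Z) x := by
      rw [mem_link]
      refine ⟨singleton_mem_orderCplx.mpr hyZ, by simpa using fun e => hyx e.symm, ?_⟩
      rw [mem_orderCplx]
      refine ⟨Finset.insert_subset hxZ (Finset.singleton_subset_iff.mpr hyZ),
        ⟨x, Finset.mem_insert_self _ _⟩, ?_⟩
      rw [Finset.coe_insert, Finset.coe_singleton]
      refine Set.subsingleton_singleton.isChain.insert fun z hz _ => ?_
      rw [Set.mem_singleton_iff] at hz; subst hz
      exact hyc.symm
    have hlink2 := ha2 _ hy_link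
    rw [mem_link] at hlink2
    obtain ⟨-, -, hchain3⟩ := mem_orderCplx.mp hlink2.1
    have hma : a ∈ (↑(insert a ({y} : Finset P)) : Set P) := by
      rw [Finset.coe_insert]; exact Set.mem_insert _ _
    have hmy : y ∈ (↑(insert a ({y} : Finset P)) : Set P) := by
      rw [Finset.coe_insert, Finset.coe_singleton]
      exact Set.mem_insert_of_mem _ rfl
    exact hchain3 hma hmy (fun e => hya e.symm)
  rcases hcomp_ax with hle | hle
  · -- a < x : find z with a < z < x, take minimal, it is a beat point
    have halt : a < x := lt_of_le_of_ne hle hax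
    have hnb := h x
    rw [BeatPoint] at hnb
    push_neg at hnb
    obtain ⟨hnd1, -⟩ := hnb hxZ
    obtain ⟨z, hzZ, hzx, hnza⟩ := hnd1 a haZ halt
    have haz : a < z := by
      rcases hkey z hzZ hzx.ne (Or.inl hzx.le) with h' | h'
      · exact lt_of_le_of_ne h' (fun e => hnza (le_of_eq e.symm))
      · exact absurd h' hnza
    have hS : (Z.filter fun w => a < w ∧ w < x).Nonempty :=
      ⟨z, Finset.mem_filter.mpr ⟨hzZ, haz, hzx⟩⟩
    obtain ⟨m, hmS, hmin⟩ := (show ∃ m ∈ Z.filter (fun w => a < w ∧ w < x), ∀ y ∈ Z.filter (fun w => a < w ∧ w < x), ¬ y < m from by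
      obtain ⟨m, hm⟩ := Finset.exists_minimal (hs := hS)
      exact ⟨m, hm.1, fun y hy hlt => hlt.not_ge (hm.2 hy hlt.le)⟩)
    rw [Finset.mem_filter] at hmS
    obtain ⟨hmZ, ham, hmx⟩ := hmS
    refine h m ⟨hmZ, Or.inl ⟨a, haZ, ham, ?_⟩⟩
    intro w hwZ hwm
    have hwx : w < x := hwm.trans hmx
    rcases hkey w hwZ hwx.ne (Or.inl hwx.le) with h' | h'
    · rcases eq_or_lt_of_le h' with e | hlt
      · exact e ▸ le_rfl
      · exact absurd hwm (hmin w (Finset.mem_filter.mpr ⟨hwZ, hlt, hwx⟩))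
    · exact h'
  · -- x < a : dual
    have halt : x < a := lt_of_le_of_ne hle hax.symm
    have hnb := h x
    rw [BeatPoint] at hnb
    push_neg at hnb
    obtain ⟨-, hnd2⟩ := hnb hxZ
    obtain ⟨z, hzZ, hxz, hnaz⟩ := hnd2 a haZ halt
    have haz : z < a := by
      rcases hkey z hzZ hxz.ne' (Or.inr hxz.le) with h' | h'
      · exact absurd h' hnaz
      · exact lt_of_le_of_ne h' (fun e => hnaz (le_of_eq e.symm))
    have hS : (Z.filter fun w => x < w ∧ w < a).Nonempty :=
      ⟨z, Finset.mem_filter.mpr ⟨hzZ, hxz, haz⟩⟩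
    obtain ⟨m, hmS, hmax⟩ := (show ∃ m ∈ Z.filter (fun w => x < w ∧ w < a), ∀ y ∈ Z.filter (fun w => x < w ∧ w < a), ¬ m < y from by
      obtain ⟨m, hm⟩ := Finset.exists_maximal (hs := hS)
      exact ⟨m, hm.1, fun y hy hlt => hlt.not_ge (hm.2 hy hlt.le)⟩)
    rw [Finset.mem_filter] at hmS
    obtain ⟨hmZ, hxm, hma⟩ := hmS
    refine h m ⟨hmZ, Or.inr ⟨a, haZ, hma, ?_⟩⟩
    intro w hwZ hwm
    have hwx : x < w := hxm.trans hwm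
    rcases hkey w hwZ hwx.ne' (Or.inr hwx.le) with h' | h'
    · exact h'
    · rcases eq_or_lt_of_le h' with e | hlt
      · exact e ▸ le_rfl
      · exact absurd hwm (hmax w (Finset.mem_filter.mpr ⟨hwZ, hwx, hlt⟩))


theorem isSimplicial_id {K L : Cplx V} (h : K.faces ⊆ L.faces) : IsSimplicial K L id := by
  intro σ hσ; rw [Finset.image_id]; exact h hσ

theorem isSimplicial_comp {K L M : Cplx V} {f g : V → V}
    (hf : IsSimplicial K L f) (hg : IsSimplicial L M g) : IsSimplicial K M (g ∘ f) := by
  intro σ hσ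
  rw [← Finset.image_image]
  exact hg _ (hf _ hσ)

theorem contiguous_conj {K L : Cplx V} {f g p q : V → V}
    (hf : IsSimplicial K L f) (hg : IsSimplicial L K g) (h : Contiguous L L p q) :
    Contiguous K K (g ∘ p ∘ f) (g ∘ q ∘ f) := by
  intro σ hσ
  have h1 : σ.image (g ∘ p ∘ f) = ((σ.image f).image p).image g := by
    rw [Finset.image_image, Finset.image_image]; rfl
  have h2 : σ.image (g ∘ q ∘ f) = ((σ.image f).image q).image g := by
    rw [Finset.image_image, Finset.image_image]; rfl
  rw [h1, h2, ← Finset.image_union]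
  exact hg _ (h _ (hf _ hσ))

theorem contigClass_conj {K L : Cplx V} {f g p q : V → V}
    (hf : IsSimplicial K L f) (hg : IsSimplicial L K g) (h : ContigClass L L p q) :
    ContigClass K K (g ∘ p ∘ f) (g ∘ q ∘ f) :=
  Relation.ReflTransGen.lift (fun r => g ∘ r ∘ f) (fun _ _ hr => contiguous_conj hf hg hr) _ _ h

/-- Strong equivalence as a relation between complexes. -/
def SE (K L : Cplx V) : Prop := ∃ f, StrongEquiv K L f

theorem SE_refl (K : Cplx V) : SE K K :=
  ⟨id, isSimplicial_id subset_rfl, id, isSimplicial_id subset_rfl,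
    Relation.ReflTransGen.refl, Relation.ReflTransGen.refl⟩

theorem SE_symm {K L : Cplx V} (h : SE K L) : SE L K := by
  obtain ⟨f, hf, g, hg, h1, h2⟩ := h
  exact ⟨g, hg, f, hf, h2, h1⟩

theorem SE_trans {K L M : Cplx V} (hKL : SE K L) (hLM : SE L M) : SE K M := by
  obtain ⟨f1, hf1, g1, hg1, hK1, hL1⟩ := hKL
  obtain ⟨f2, hf2, g2, hg2, hL2, hM2⟩ := hLM
  refine ⟨f2 ∘ f1, isSimplicial_comp hf1 hf2, g1 ∘ g2, isSimplicial_comp hg2 hg1, ?_, ?_⟩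
  · exact Relation.ReflTransGen.trans
      (show ContigClass K K ((g1 ∘ g2) ∘ (f2 ∘ f1)) (g1 ∘ f1) from
        contigClass_conj hf1 hg1 hL2) hK1
  · exact Relation.ReflTransGen.trans
      (show ContigClass M M ((f2 ∘ f1) ∘ (g1 ∘ g2)) (f2 ∘ g2) from
        contigClass_conj hg2 hf2 hL1) hM2


theorem SE_of_elem {K L : Cplx V} (h : ElemStrongCollapse K L) : SE K L := by
  obtain ⟨v, ⟨a, ha1, ha2⟩, rfl⟩ := h
  rw [mem_link] at ha1
  have hav : a ≠ v := fun e => ha1.2.1 (by simp [e])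
  set r : V → V := fun u => if u = v then a else u with hr
  have himg_not : ∀ σ : Finset V, v ∉ σ → σ.image r = σ := by
    intro σ hv
    rw [show σ.image r = σ.image id from Finset.image_congr ?_, Finset.image_id]
    intro u hu
    have : u ≠ v := fun e => hv (e ▸ hu)
    simp [hr, this]
  have himg_mem : ∀ σ : Finset V, v ∈ σ → σ.image r = insert a (σ.erase v) := by
    intro σ hv
    ext u
    simp only [Finset.mem_image, Finset.mem_insert, Finset.mem_erase]
    constructor
    · rintro ⟨w, hw, rfl⟩
      by_cases hwv : w = v
      · left; simp [hr, hwv]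
      · right; refine ⟨?_, ?_⟩ <;> simp [hr, hwv, hw]
    · rintro (rfl | ⟨huv, hu⟩)
      · exact ⟨v, hv, by simp [hr]⟩
      · exact ⟨u, hu, by simp [hr, huv]⟩
  have hins : ∀ σ ∈ K.faces, v ∈ σ → insert a σ ∈ K.faces := by
    intro σ hσ hv
    by_cases hone : σ.erase v = ∅
    · have hσv : σ = {v} := by
        apply Finset.eq_singleton_iff_unique_mem.mpr
        refine ⟨hv, fun u hu => ?_⟩
        by_contra huv
        exact absurd (hone ▸ Finset.mem_erase.mpr ⟨huv, hu⟩) (Finset.notMem_empty u)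
      have hpair : insert a ({v} : Finset V) = insert v ({a} : Finset V) := by
        ext u; simp [or_comm]
      rw [hσv, hpair]
      exact ha1.2.2
    · have hτ : σ.erase v ∈ link K v := by
        rw [mem_link]
        refine ⟨K.down_closed hσ (Finset.erase_subset _ _)
          (Finset.nonempty_iff_ne_empty.mpr hone), Finset.notMem_erase _ _, ?_⟩
        rw [Finset.insert_erase hv]; exact hσ
      have h2 := (mem_link.mp (ha2 _ hτ)).2.2
      rw [Finset.insert_comm, Finset.insert_erase hv] at h2
      exact h2
  have hr_simp : IsSimplicial K (delete K v) r := by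
    intro σ hσ
    by_cases hv : v ∈ σ
    · rw [himg_mem σ hv]
      simp only [delete, Finset.mem_filter]
      constructor
      · refine K.down_closed (hins σ hσ hv) ?_ ⟨a, Finset.mem_insert_self _ _⟩
        intro u hu
        rcases Finset.mem_insert.mp hu with rfl | hu
        · exact Finset.mem_insert_self _ _
        · exact Finset.mem_insert_of_mem (Finset.mem_of_mem_erase hu)
      · intro hmem
        rcases Finset.mem_insert.mp hmem with e | hmem
        · exact hav e.symm
        · exact absurd hmem (Finset.notMem_erase _ _)
    · rw [himg_not σ hv]
      simp only [delete, Finset.mem_filter]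
      exact ⟨hσ, hv⟩
  have hcont : Contiguous K K r id := by
    intro σ hσ
    rw [Finset.image_id]
    by_cases hv : v ∈ σ
    · rw [himg_mem σ hv]
      have huni : insert a (σ.erase v) ∪ σ = insert a σ := by
        ext u
        simp only [Finset.mem_union, Finset.mem_insert, Finset.mem_erase]
        constructor
        · rintro ((rfl | ⟨-, hu⟩) | hu)
          · exact Or.inl rfl
          · exact Or.inr hu
          · exact Or.inr hu
        · rintro (rfl | hu)
          · exact Or.inl (Or.inl rfl)
          · exact Or.inr hu
      rw [huni]
      exact hins σ hσ hv
    · rw [himg_not σ hv, Finset.union_self]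
      exact hσ
  refine ⟨r, hr_simp, id, isSimplicial_id (Finset.filter_subset _ _), ?_, ?_⟩
  · rw [Function.id_comp]
    exact Relation.ReflTransGen.single hcont
  · rw [Function.comp_id]
    refine Relation.ReflTransGen.single ?_
    intro σ hσ
    have hσ' := Finset.mem_filter.mp hσ
    rw [Finset.image_id, himg_not σ hσ'.2, Finset.union_self]
    exact hσ

theorem SE_of_strongCollapses {K L : Cplx V} (h : StrongCollapses K L) : SE K L := by
  induction h with
  | refl => exact SE_refl _
  | tail _ hstep ih => exact SE_trans ih (SE_of_elem hstep)


theorem isVertex_of_mem {K : Cplx V} {σ : Finset V} (hσ : σ ∈ K.faces) {u : V} (hu : u ∈ σ) :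
    IsVertex K u :=
  K.down_closed hσ (Finset.singleton_subset_iff.mpr hu) (Finset.singleton_nonempty u)

theorem image_eq_of_vertex_id {K : Cplx V} {ψ : V → V} (hψ : ∀ u, IsVertex K u → ψ u = u)
    {σ : Finset V} (hσ : σ ∈ K.faces) : σ.image ψ = σ := by
  rw [show σ.image ψ = σ.image id from
    Finset.image_congr fun u hu => hψ u (isVertex_of_mem hσ (Finset.mem_coe.mp hu)),
    Finset.image_id]

theorem id_on_vertices_of_contiguous {M : Cplx V} (hM : MinimalCplx M) {φ ψ : V → V}
    (hc : Contiguous M M φ ψ) (hψ : ∀ u, IsVertex M u → ψ u = u) :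
    ∀ u, IsVertex M u → φ u = u := by
  intro v hv
  by_contra hne
  apply hM v
  refine ⟨φ v, ?_, ?_⟩
  · have h1 := hc {v} hv
    rw [Finset.image_singleton, Finset.image_singleton, hψ v hv,
      ← Finset.insert_eq] at h1
    rw [mem_link]
    refine ⟨M.down_closed h1 (Finset.singleton_subset_iff.mpr (Finset.mem_insert_self _ _))
      (Finset.singleton_nonempty _), ?_, ?_⟩
    · simp only [Finset.mem_singleton]
      exact fun e => hne e.symm
    · have hpair : insert v ({φ v} : Finset V) = insert (φ v) {v} := by
        ext u; simp [or_comm]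
      rw [hpair]; exact h1
  · intro σ hσ
    rw [mem_link] at hσ
    obtain ⟨hσf, hvσ, hins⟩ := hσ
    have h2 := hc _ hins
    rw [image_eq_of_vertex_id hψ hins] at h2
    have hsub : insert (φ v) (insert v σ) ⊆ (insert v σ).image φ ∪ insert v σ := by
      intro u hu
      rcases Finset.mem_insert.mp hu with rfl | hu
      · exact Finset.mem_union_left _ (Finset.mem_image_of_mem φ (Finset.mem_insert_self _ _))
      · exact Finset.mem_union_right _ hu
    have h3 : insert (φ v) (insert v σ) ∈ M.faces :=
      M.down_closed h2 hsub ⟨φ v, Finset.mem_insert_self _ _⟩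
    rw [mem_link]
    refine ⟨?_, ?_, ?_⟩
    · refine M.down_closed h3 ?_ ⟨φ v, Finset.mem_insert_self _ _⟩
      intro u hu
      rcases Finset.mem_insert.mp hu with rfl | hu
      · exact Finset.mem_insert_self _ _
      · exact Finset.mem_insert_of_mem (Finset.mem_insert_of_mem hu)
    · intro hmem
      rcases Finset.mem_insert.mp hmem with e | hmem
      · exact hne e.symm
      · exact hvσ hmem
    · rw [Finset.insert_comm]; exact h3

theorem id_on_vertices_of_contigClass {M : Cplx V} (hM : MinimalCplx M) {φ : V → V}
    (h : ContigClass M M φ id) : ∀ u, IsVertex M u → φ u = u := by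
  induction h using Relation.ReflTransGen.head_induction_on with
  | refl => intro u _; rfl
  | head hstep _ ih => exact id_on_vertices_of_contiguous hM hstep ih

theorem eq_pt_of_SE_pt {M : Cplx V} {w : V} (hM : MinimalCplx M) (h : SE (pt w) M) :
    ∃ c, M = pt c := by
  obtain ⟨f, hf, g, hg, -, hMM⟩ := h
  have hidv := id_on_vertices_of_contigClass hM hMM
  have hwface : ({w} : Finset V) ∈ (pt w).faces := by simp [pt]
  have hcface : ({f w} : Finset V) ∈ M.faces := by
    have := hf _ hwface
    rwa [Finset.image_singleton] at this
  have hvert : ∀ u, IsVertex M u → u = f w := by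
    intro u hu
    have hgu : g u = w := by
      have hgu' := hg _ hu
      rw [Finset.image_singleton] at hgu'
      simpa [pt] using hgu'
    have hcomp := hidv u hu
    rw [← hcomp]
    simp [Function.comp, hgu]
  refine ⟨f w, Cplx.ext' ?_⟩
  ext σ
  simp only [pt, Finset.mem_singleton]
  constructor
  · intro hσ
    have hsub : σ ⊆ {f w} := fun u hu =>
      Finset.mem_singleton.mpr (hvert u (isVertex_of_mem hσ hu))
    rcases Finset.subset_singleton_iff.mp hsub with e | e
    · exact absurd e (Finset.nonempty_iff_ne_empty.mp (M.nonempty_of_mem hσ))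
    · exact e
  · rintro rfl; exact hcface

theorem exists_poset_core (Z : Finset P) :
    ∃ Zc : Finset P, PosetStrongCollapses Z Zc ∧ (∀ x, ¬ BeatPoint Zc x) := by
  induction Z using Finset.strongInduction with
  | _ Z ih =>
    by_cases h : ∃ x, BeatPoint Z x
    · obtain ⟨x, hx⟩ := h
      obtain ⟨Zc, h1, h2⟩ := ih (Z.erase x) (Finset.erase_ssubset hx.1)
      exact ⟨Zc, Relation.ReflTransGen.head ⟨x, hx, rfl⟩ h1, h2⟩
    · exact ⟨Z, Relation.ReflTransGen.refl, fun x hx => h ⟨x, hx⟩⟩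

theorem contractible_iff_strongCollapsible (Z : Finset P) :
    PosetContractible Z ↔ StrongCollapsible (orderCplx Z) := by
  constructor
  · rintro ⟨x, hx⟩
    refine ⟨x, ?_⟩
    have := strongCollapses_orderCplx hx
    rwa [orderCplx_singleton] at this
  · rintro ⟨w, hw⟩
    obtain ⟨Zc, hZZc, hmin⟩ := exists_poset_core Z
    have h1 : SE (orderCplx Z) (pt w) := SE_of_strongCollapses hw
    have h2 : SE (orderCplx Z) (orderCplx Zc) :=
      SE_of_strongCollapses (strongCollapses_orderCplx hZZc)
    have h3 : SE (pt w) (orderCplx Zc) := SE_trans (SE_symm h1) h2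
    obtain ⟨c, hc⟩ := eq_pt_of_SE_pt (minimalCplx_of_minimal hmin) h3
    have hZc : Zc = {c} := orderCplx_inj (by rw [hc, orderCplx_singleton])
    exact ⟨c, hZc ▸ hZZc⟩


theorem not_strongCollapsible_empty {K : Cplx V} (h : K.faces = ∅) :
    ¬ StrongCollapsible K := by
  rintro ⟨w, hw⟩
  rcases Relation.ReflTransGen.cases_head hw with heq | ⟨c, ⟨v, ⟨a, ha, -⟩, -⟩, -⟩
  · have hm : ({w} : Finset V) ∈ K.faces := by rw [heq]; simp [pt]
    rw [h] at hm
    exact Finset.notMem_empty _ hm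
  · have hm := (mem_link.mp ha).1
    rw [h] at hm
    exact Finset.notMem_empty _ hm

theorem linkCplx_orderCplx_faces_empty {Z : Finset P} {x : P} (hx : x ∉ Z) :
    (linkCplx (orderCplx Z) x).faces = ∅ := by
  ext σ
  simp only [Finset.notMem_empty, iff_false]
  intro hσ
  have hσ' : σ ∈ link (orderCplx Z) x := hσ
  have hm := (mem_link.mp hσ').2.2
  exact hx ((mem_orderCplx.mp hm).1 (Finset.mem_insert_self _ _))

theorem posetCollapses_to_ncollapses {A B : Finset P} (h : PosetCollapses A B) :
    NCollapses 1 (orderCplx A) (orderCplx B) := by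
  show Relation.ReflTransGen _ _ _
  refine Relation.ReflTransGen.lift orderCplx ?_ _ _ h
  rintro Z W ⟨x, ⟨hxZ, hcon⟩, rfl⟩
  refine ⟨x, ?_, (delete_orderCplx Z x).symm⟩
  rw [linkCplx_orderCplx hxZ]
  exact (contractible_iff_strongCollapsible _).mp hcon

theorem ncollapses_to_posetCollapses {A B : Finset P}
    (h : NCollapses 1 (orderCplx A) (orderCplx B)) : PosetCollapses A B := by
  have h' : Relation.ReflTransGen
      (fun K L => (∃ v, (∃ w, StrongCollapses (linkCplx K v) (pt w)) ∧ L = delete K v))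
      (orderCplx A) (orderCplx B) := h
  clear h
  suffices H : ∀ (K : Cplx P), Relation.ReflTransGen
      (fun K L => (∃ v, (∃ w, StrongCollapses (linkCplx K v) (pt w)) ∧ L = delete K v))
      K (orderCplx B) → ∀ A', K = orderCplx A' → PosetCollapses A' B by
    exact H _ h' A rfl
  intro K hK
  induction hK using Relation.ReflTransGen.head_induction_on with
  | refl =>
    intro A' hA'
    rw [orderCplx_inj hA']
    exact Relation.ReflTransGen.refl
  | head hstep htail ih =>
    intro A' hA'
    subst hA'
    obtain ⟨v, hv, rfl⟩ := hstep
    have hvA : v ∈ A' := by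
      by_contra hvn
      exact not_strongCollapsible_empty (linkCplx_orderCplx_faces_empty hvn) hv
    have hweak : WeakPoint A' v := by
      refine ⟨hvA, ?_⟩
      rw [contractible_iff_strongCollapsible, ← linkCplx_orderCplx hvA]
      exact hv
    exact Relation.ReflTransGen.head ⟨v, hweak, rfl⟩ (ih _ (delete_orderCplx A' v))

end Proof

/-- a finite poset collapses to a subposet `Y` iff its order complex
1-collapses to the order complex of `Y`; in particular, `X` is collapsible iff
`K(X)` is 1-collapsible. -/
theorem stmt17 {P : Type} [PartialOrder P] (X Y : Finset P) (hYX : Y ⊆ X) :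
    (PosetCollapses X Y ↔ NCollapses 1 (orderCplx X) (orderCplx Y)) ∧
    (PosetCollapsible X ↔ NCollapsible 1 (orderCplx X)) := by
  refine ⟨⟨posetCollapses_to_ncollapses, ncollapses_to_posetCollapses⟩, ?_, ?_⟩
  · rintro ⟨x, hx⟩
    exact ⟨x, by rw [← orderCplx_singleton]; exact posetCollapses_to_ncollapses hx⟩
  · rintro ⟨v, hv⟩
    exact ⟨v, ncollapses_to_posetCollapses (by rwa [orderCplx_singleton])⟩

end StrongHomotopy
end
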